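/- Let k be a natural number, let M=(X,R,D,θ) be a bimodal model in which every substitution instance of the formula CF_k is true, let Γ be a finite subformula-closed set of bimodal formulas, let Ψ⊇Γ be a finite set of bimodal formulas, and let M̂=(X/∼_Ψ, R̂, D̂, θ̂) be a definable Γ-filtration of M through ∼_Ψ. Then C(X/∼_Ψ, R̂)>k, i.e., the quotient X/∼_Ψ has no proper partition with at most k elements with respect to R̂. -/

import Mathlib

/-- Bimodal formulas: variables, ⊥, →, ◇ (along R), ⟨≠⟩ (along D). -/
inductive BForm : Type
  | var : ℕ → BForm
  | bot : BForm
  | imp : BForm → BForm → BForm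
  | dia : BForm → BForm
  | ddia : BForm → BForm
  deriving DecidableEq

namespace BForm

def neg (φ : BForm) : BForm := imp φ bot
def top : BForm := neg bot
def or (φ ψ : BForm) : BForm := imp (neg φ) ψ
def and (φ ψ : BForm) : BForm := neg (imp φ (neg ψ))
def box (φ : BForm) : BForm := neg (dia (neg φ))
def dbox (φ : BForm) : BForm := neg (ddia (neg φ))
/-- ∃φ := ⟨≠⟩φ ∨ φ -/
def Ex (φ : BForm) : BForm := or (ddia φ) φ
/-- ∀φ := [≠]φ ∧ φ -/
def All (φ : BForm) : BForm := and (dbox φ) φ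

/-- Uniform substitution. -/
def subst (σ : ℕ → BForm) : BForm → BForm
  | var p => σ p
  | bot => bot
  | imp a b => imp (subst σ a) (subst σ b)
  | dia a => dia (subst σ a)
  | ddia a => ddia (subst σ a)

/-- The set of subformulas of a formula. -/
def sub : BForm → Finset BForm
  | var p => {var p}
  | bot => {bot}
  | imp a b => insert (imp a b) (sub a ∪ sub b)
  | dia a => insert (dia a) (sub a)
  | ddia a => insert (ddia a) (sub a)

def bigOr : List BForm → BForm
  | [] => bot
  | φ :: l => or φ (bigOr l)

def bigAnd : List BForm → BForm
  | [] => top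
  | φ :: l => and φ (bigAnd l)

/-- CF_k := ∀⋁_{i<k}(p_i ∧ ⋀_{j<k, j≠i}¬p_j) → ∃⋁_{i<k}(p_i ∧ ◇p_i). -/
def CF (k : ℕ) : BForm :=
  imp
    (All (bigOr ((List.range k).map fun i =>
      and (var i) (bigAnd (((List.range k).filter (fun j => j ≠ i)).map fun j => neg (var j))))))
    (Ex (bigOr ((List.range k).map fun i => and (var i) (dia (var i)))))

/-- Con := ∃p ∧ ∃¬p → ∃(p ∧ ◇¬p). -/
def Con : BForm :=
  imp (and (Ex (var 0)) (Ex (neg (var 0)))) (Ex (and (var 0) (dia (neg (var 0)))))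

/-- p → [≠]⟨≠⟩p -/
def axB1 : BForm := imp (var 0) (dbox (ddia (var 0)))
/-- ⟨≠⟩⟨≠⟩p → ∃p -/
def axB2 : BForm := imp (ddia (ddia (var 0))) (Ex (var 0))
/-- ◇p → ∃p -/
def axB3 : BForm := imp (dia (var 0)) (Ex (var 0))
/-- p → □◇p -/
def axSymm : BForm := imp (var 0) (box (dia (var 0)))

end BForm

/-- Truth of a bimodal formula at a point of a model (X, R, D, θ). -/
def BSat {X : Type} (R D : X → X → Prop) (θ : ℕ → X → Prop) : X → BForm → Prop
  | x, .var p => θ p x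
  | _, .bot => False
  | x, .imp a b => BSat R D θ x a → BSat R D θ x b
  | x, .dia a => ∃ y, R x y ∧ BSat R D θ y a
  | x, .ddia a => ∃ y, D x y ∧ BSat R D θ y a

/-- Validity of a bimodal formula in the frame (X, R, D). -/
def BValid {X : Type} (R D : X → X → Prop) (φ : BForm) : Prop :=
  ∀ (θ : ℕ → X → Prop) (x : X), BSat R D θ x φ

/-- φ is a classical tautology (a substitution instance of a propositional tautology):
it is true under every assignment of truth values that respects ⊥ and →. -/
def IsTautology (φ : BForm) : Prop :=
  ∀ v : BForm → Prop, ¬ v .bot → (∀ a b, v (.imp a b) ↔ (v a → v b)) → v φ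

/-- Normal bimodal logics. -/
structure IsNormalBL (L : Set BForm) : Prop where
  taut : ∀ φ, IsTautology φ → φ ∈ L
  negDiaBot : BForm.neg (.dia .bot) ∈ L
  negDdiaBot : BForm.neg (.ddia .bot) ∈ L
  diaOr : BForm.imp (.dia (.or (.var 0) (.var 1))) (.or (.dia (.var 0)) (.dia (.var 1))) ∈ L
  ddiaOr : BForm.imp (.ddia (.or (.var 0) (.var 1))) (.or (.ddia (.var 0)) (.ddia (.var 1))) ∈ L
  mp : ∀ φ ψ, BForm.imp φ ψ ∈ L → φ ∈ L → ψ ∈ L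
  subst : ∀ φ σ, φ ∈ L → BForm.subst σ φ ∈ L
  monoDia : ∀ φ ψ, BForm.imp φ ψ ∈ L → BForm.imp (.dia φ) (.dia ψ) ∈ L
  monoDdia : ∀ φ ψ, BForm.imp φ ψ ∈ L → BForm.imp (.ddia φ) (.ddia ψ) ∈ L

/-- The smallest normal bimodal logic containing a given set of axioms. -/
def NormalLogicOf (Ax : Set BForm) : Set BForm :=
  ⋂₀ {L : Set BForm | IsNormalBL L ∧ Ax ⊆ L}

/-- Axioms of K_≠. -/
def KDiffAx : Set BForm := {BForm.axB1, BForm.axB2, BForm.axB3}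
/-- Axioms of KB_≠. -/
def KBDiffAx : Set BForm := insert BForm.axSymm KDiffAx

/-- A proper partition of X w.r.t. R: a family of nonempty pairwise disjoint sets
with union X, none of which contains two R-related points. -/
def IsProperPartition {X : Type} (R : X → X → Prop) (A : Set (Set X)) : Prop :=
  (∀ a ∈ A, a.Nonempty) ∧
  (∀ a ∈ A, ∀ b ∈ A, a ≠ b → a ∩ b = ∅) ∧
  ⋃₀ A = Set.univ ∧
  ∀ a ∈ A, ∀ x ∈ a, ∀ y ∈ a, ¬ R x y

/-- C(X,R) > k : there is no finite proper partition of X with at most k elements. -/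
def ChromGT {X : Type} (R : X → X → Prop) (k : ℕ) : Prop :=
  ∀ A : Finset (Set X), A.card ≤ k → ¬ IsProperPartition R (↑A : Set (Set X))

/-- (X,R) is connected: any two points are linked by a finite path of R-edges
traversed in either direction. -/
def IsConnectedRel {X : Type} (R : X → X → Prop) : Prop :=
  ∀ x y : X, ∃ (n : ℕ) (f : ℕ → X), f 0 = x ∧ f n = y ∧
    ∀ i < n, R (f i) (f (i + 1)) ∨ R (f (i + 1)) (f i)

/-- Γ is closed under subformulas. -/
def SubClosed (Γ : Finset BForm) : Prop := ∀ φ ∈ Γ, BForm.sub φ ⊆ Γ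

section Helpers

variable {X : Type} (R D : X → X → Prop) (θ : ℕ → X → Prop)

lemma sat_imp (x : X) (a b : BForm) :
    BSat R D θ x (.imp a b) ↔ (BSat R D θ x a → BSat R D θ x b) := Iff.rfl

lemma sat_bot (x : X) : BSat R D θ x .bot ↔ False := Iff.rfl

lemma sat_neg (x : X) (a : BForm) :
    BSat R D θ x (BForm.neg a) ↔ ¬ BSat R D θ x a := Iff.rfl

lemma sat_and (x : X) (a b : BForm) :
    BSat R D θ x (BForm.and a b) ↔ BSat R D θ x a ∧ BSat R D θ x b := by
  simp only [BForm.and, sat_neg, sat_imp]; tauto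

lemma sat_or (x : X) (a b : BForm) :
    BSat R D θ x (BForm.or a b) ↔ BSat R D θ x a ∨ BSat R D θ x b := by
  simp only [BForm.or, sat_neg, sat_imp]; tauto

lemma sat_bigOr (x : X) (l : List BForm) :
    BSat R D θ x (BForm.bigOr l) ↔ ∃ φ ∈ l, BSat R D θ x φ := by
  induction l with
  | nil => simp [BForm.bigOr, sat_bot]
  | cons a l ih => simp [BForm.bigOr, sat_or, ih]

lemma sat_bigAnd (x : X) (l : List BForm) :
    BSat R D θ x (BForm.bigAnd l) ↔ ∀ φ ∈ l, BSat R D θ x φ := by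
  induction l with
  | nil => simp [BForm.bigAnd, BForm.top, sat_neg, sat_bot]
  | cons a l ih => simp [BForm.bigAnd, sat_and, ih]

lemma sat_subst (σ : ℕ → BForm) (φ : BForm) (x : X) :
    BSat R D θ x (BForm.subst σ φ) ↔
      BSat R D (fun p y => BSat R D θ y (σ p)) x φ := by
  induction φ generalizing x with
  | var p => simp [BForm.subst, BSat]
  | bot => simp [BForm.subst, BSat]
  | imp a b iha ihb => simp only [BForm.subst, sat_imp, iha, ihb]
  | dia a ih => simp only [BForm.subst, BSat, ih]
  | ddia a ih => simp only [BForm.subst, BSat, ih]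

lemma sat_All_of (x : X) (ψ : BForm) (h : ∀ z, BSat R D θ z ψ) :
    BSat R D θ x (BForm.All ψ) := by
  rw [BForm.All, sat_and]
  refine ⟨?_, h x⟩
  rw [BForm.dbox, sat_neg]
  rintro ⟨y, _, hy⟩
  exact (sat_neg R D θ y ψ).mp hy (h y)

lemma sat_Ex_elim (x : X) (φ : BForm) (h : BSat R D θ x (BForm.Ex φ)) :
    ∃ z, BSat R D θ z φ := by
  rw [BForm.Ex, sat_or] at h
  rcases h with h | h
  · obtain ⟨y, _, hy⟩ := h; exact ⟨y, hy⟩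
  · exact ⟨x, h⟩

end Helpers

/-- If every substitution instance of CF_k is true in M = (X,R,D,θ) and
M̂ = (X/∼_Ψ, R̂, D̂, θ̂) is a definable Γ-filtration of M (the quotient X/∼_Ψ being
represented by a surjection q identifying exactly the points satisfying the same
formulas of Ψ), then C(X/∼_Ψ, R̂) > k. -/
theorem stmt3 {X : Type} [Nonempty X] (R D : X → X → Prop) (θ : ℕ → X → Prop) (k : ℕ)
    (hCF : ∀ (σ : ℕ → BForm) (x : X), BSat R D θ x (BForm.subst σ (BForm.CF k)))
    (Γ Ψ : Finset BForm) (hΓ : SubClosed Γ) (hΓΨ : Γ ⊆ Ψ)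
    (Q : Type) (q : X → Q) (hsurj : Function.Surjective q)
    (hq : ∀ x y, q x = q y ↔ ∀ ψ ∈ Ψ, (BSat R D θ x ψ ↔ BSat R D θ y ψ))
    (R' D' : Q → Q → Prop) (θ' : ℕ → Q → Prop)
    (hval : ∀ p, BForm.var p ∈ Γ → ∀ x, θ' p (q x) ↔ θ p x)
    (hRmin : ∀ x y, R x y → R' (q x) (q y))
    (hRmax : ∀ x y, R' (q x) (q y) →
      ∀ ψ, BForm.dia ψ ∈ Γ → BSat R D θ y ψ → BSat R D θ x (.dia ψ))
    (hDmin : ∀ x y, D x y → D' (q x) (q y))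
    (hDmax : ∀ x y, D' (q x) (q y) →
      ∀ ψ, BForm.ddia ψ ∈ Γ → BSat R D θ y ψ → BSat R D θ x (.ddia ψ)) :
    ChromGT R' k := by
  classical
  intro A hcard hpart
  obtain ⟨hne, hdisj, huniv, hproper⟩ := hpart
  set L := A.toList with hLdef
  have hLm : ∀ a, a ∈ L ↔ a ∈ A := fun a => Finset.mem_toList
  have hLnd : L.Nodup := A.nodup_toList
  have hLlen : L.length = A.card := A.length_toList
  -- sign vectors
  let S := {ψ // ψ ∈ Ψ}
  let sgn : X → S → Bool := fun x ψ => decide (BSat R D θ x ψ.1)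
  let chi : (S → Bool) → BForm := fun s =>
    BForm.bigAnd (Ψ.attach.toList.map fun ψ => if s ψ then ψ.1 else ψ.1.neg)
  have sat_chi : ∀ (s : S → Bool) (y : X),
      BSat R D θ y (chi s) ↔ sgn y = s := by
    intro s y
    rw [funext_iff]
    rw [sat_bigAnd]
    constructor
    · intro h ψ
      have hh := h _ (List.mem_map.mpr ⟨ψ, Finset.mem_toList.mpr (Finset.mem_attach _ _), rfl⟩)
      by_cases hs : s ψ = true
      · rw [hs, if_pos rfl] at hh
        simp only [sgn, hs, decide_eq_true_iff]
        exact hh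
      · rw [Bool.not_eq_true] at hs
        rw [hs, if_neg (by simp)] at hh
        rw [sat_neg] at hh
        simp only [sgn, hs, decide_eq_false_iff_not]
        exact hh
    · intro h φ hφ
      obtain ⟨ψ, _, rfl⟩ := List.mem_map.mp hφ
      have hψ := h ψ
      by_cases hs : s ψ = true
      · rw [hs, if_pos rfl]
        rw [hs] at hψ
        exact of_decide_eq_true hψ
      · rw [Bool.not_eq_true] at hs
        rw [hs, if_neg (by simp), sat_neg]
        rw [hs] at hψ
        exact of_decide_eq_false hψ
  -- defining formula for the preimage of a set of classes
  let Phi : Set Q → BForm := fun a =>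
    BForm.bigOr (((Finset.univ : Finset (S → Bool)).filter
      (fun s => ∃ x, sgn x = s ∧ q x ∈ a)).toList.map chi)
  have sat_Phi : ∀ (a : Set Q) (y : X), BSat R D θ y (Phi a) ↔ q y ∈ a := by
    intro a y
    rw [sat_bigOr]
    constructor
    · rintro ⟨φ, hφ, hy⟩
      obtain ⟨s, hs, rfl⟩ := List.mem_map.mp hφ
      rw [Finset.mem_toList, Finset.mem_filter] at hs
      obtain ⟨-, x, hsx, hxa⟩ := hs
      rw [sat_chi] at hy
      have hqxy : q y = q x := by
        rw [hq]
        intro ψ hψ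
        have : sgn y ⟨ψ, hψ⟩ = sgn x ⟨ψ, hψ⟩ := by rw [hy, hsx]
        exact decide_eq_decide.mp this
      rw [hqxy]; exact hxa
    · intro hya
      refine ⟨chi (sgn y), List.mem_map.mpr ⟨sgn y, ?_, rfl⟩, (sat_chi _ y).mpr rfl⟩
      rw [Finset.mem_toList, Finset.mem_filter]
      exact ⟨Finset.mem_univ _, y, rfl, hya⟩
  -- the cells and the substitution
  let cell : ℕ → Set Q := fun i => if h : i < L.length then L.get ⟨i, h⟩ else ∅
  let σ : ℕ → BForm := fun i => Phi (cell i)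
  let V : ℕ → X → Prop := fun p y => BSat R D θ y (σ p)
  have hV : ∀ i z, V i z ↔ q z ∈ cell i := fun i z => sat_Phi (cell i) z
  -- each cell with index < L.length belongs to A
  have hcellA : ∀ i (h : i < L.length), cell i ∈ A := by
    intro i h
    have : cell i = L.get ⟨i, h⟩ := dif_pos h
    rw [this, ← hLm]
    exact List.get_mem L ⟨i, h⟩
  -- exactly one cell
  have hexone : ∀ z : X, ∃ i, i < L.length ∧ q z ∈ cell i ∧
      ∀ j, j ≠ i → q z ∉ cell j := by
    intro z
    have : q z ∈ ⋃₀ (↑A : Set (Set Q)) := huniv ▸ Set.mem_univ _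
    obtain ⟨a, haA, hza⟩ := this
    rw [Finset.mem_coe, ← hLm] at haA
    obtain ⟨⟨i, hi⟩, ha⟩ := List.mem_iff_get.mp haA
    have hci : cell i = a := by
      have : cell i = L.get ⟨i, hi⟩ := dif_pos hi
      rw [this, ha]
    refine ⟨i, hi, hci ▸ hza, ?_⟩
    intro j hji hzj
    by_cases hj : j < L.length
    · have hcj : cell j = L.get ⟨j, hj⟩ := dif_pos hj
      have hne' : cell j ≠ a := by
        rw [hcj, ← ha]
        intro hcontra
        have := (List.Nodup.get_inj_iff hLnd).mp hcontra
        exact hji (by simpa using congrArg Fin.val this)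
      have hdd := hdisj (cell j) (Finset.mem_coe.mpr (hcellA j hj))
        a (Finset.mem_coe.mpr ((hLm a).mp haA)) hne'
      have : q z ∈ cell j ∩ a := ⟨hzj, hza⟩
      rw [hdd] at this
      exact this
    · have : cell j = ∅ := dif_neg hj
      rw [this] at hzj
      exact hzj
  have hmk : L.length ≤ k := hLlen ▸ hcard
  -- apply CF
  have x0 : X := Classical.arbitrary X
  have hcf := hCF σ x0
  rw [sat_subst] at hcf
  rw [BForm.CF, sat_imp] at hcf
  have hant : BSat R D V x0 (BForm.All (BForm.bigOr ((List.range k).map fun i =>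
      BForm.and (.var i) (BForm.bigAnd (((List.range k).filter (fun j => j ≠ i)).map
        fun j => BForm.neg (.var j)))))) := by
    apply sat_All_of
    intro z
    rw [sat_bigOr]
    obtain ⟨i, hi, hzi, huniq⟩ := hexone z
    refine ⟨_, List.mem_map.mpr ⟨i, List.mem_range.mpr (lt_of_lt_of_le hi hmk), rfl⟩, ?_⟩
    rw [sat_and]
    refine ⟨(hV i z).mpr hzi, ?_⟩
    rw [sat_bigAnd]
    intro φ hφ
    obtain ⟨j, hj, rfl⟩ := List.mem_map.mp hφ
    rw [List.mem_filter] at hj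
    have hji : j ≠ i := by simpa using hj.2
    rw [sat_neg]
    intro hVj
    exact huniq j hji ((hV j z).mp hVj)
  have hcons := sat_Ex_elim _ _ _ _ _ (hcf hant)
  obtain ⟨z, hz⟩ := hcons
  rw [sat_bigOr] at hz
  obtain ⟨φ, hφ, hzφ⟩ := hz
  obtain ⟨i, -, rfl⟩ := List.mem_map.mp hφ
  rw [sat_and] at hzφ
  obtain ⟨hzi, hdia⟩ := hzφ
  obtain ⟨w, hRzw, hwi⟩ := hdia
  have hzi' : q z ∈ cell i := (hV i z).mp hzi
  have hwi' : q w ∈ cell i := (hV i w).mp hwi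
  have hil : i < L.length := by
    by_contra h
    have : cell i = ∅ := dif_neg h
    rw [this] at hzi'
    exact hzi'
  exact hproper (cell i) (Finset.mem_coe.mpr (hcellA i hil)) _ hzi' _ hwi'
    (hRmin z w hRzw)
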